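/- For all 1 ≤ k < j < i ≤ n, the following elements of F lie in the S-submodule span_S(B): x_{kl} x_{kp}·r_{ijk} for all 1 ≤ p ≤ l ≤ k−1, and x_{jq} x_{kp}·r_{ijk} for all 1 ≤ q ≤ k and 1 ≤ p ≤ k−1. -/

import Mathlib

/-- Index set for the variables `x_{ij}` (`1 ≤ j < i ≤ n`, `0`-indexed). -/
abbrev PIdx (n : ℕ) := { p : Fin n × Fin n // p.2 < p.1 }

/-- The polynomial ring `S = ℂ[x_{ij} : j < i]`. -/
abbrev Sn (n : ℕ) := MvPolynomial (PIdx n) ℂ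

/-- Index set for the basis `r_{ijk}` (`k < j < i`). -/
abbrev TIdx (n : ℕ) := { t : Fin n × Fin n × Fin n // t.2.2 < t.2.1 ∧ t.2.1 < t.1 }

/-- The free `S`-module `F` with basis `{r_{ijk} : k < j < i}`. -/
abbrev Fn (n : ℕ) := TIdx n → Sn n

/-- The variable `x_{ij}` (for `j < i`). -/
noncomputable def Xv (n : ℕ) (i j : Fin n) (h : j < i) : Sn n := MvPolynomial.X ⟨(i, j), h⟩

/-- The basis element `r_{ijk}` of `F` (for `k < j < i`). -/
noncomputable def rGen (n : ℕ) (i j k : Fin n) (h1 : k < j) (h2 : j < i) : Fn n :=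
  Pi.single ⟨(i, j, k), h1, h2⟩ 1

/-- The generating set `B = ∪ B_{ijk}` of relations (`g₁,…,g₄, h₁,…,h₈` of the paper):
for each `k < j < i` and admissible `l₁ < k < l₂ < j < l₃ < i < l₄` and pairs `t < s`
with `{s,t} ∩ {i,j,k} = ∅`. -/
noncomputable def BSet (n : ℕ) : Set (Fn n) :=
  { w | ∃ (i j k : Fin n) (hkj : k < j) (hji : j < i),
    -- g₁
    (∃ (l : Fin n) (h1 : k < l) (h2 : l < j),
      w = (-Xv n j k hkj - Xv n l k h1) • rGen n i j l h2 hji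
          + Xv n j l h2 • rGen n i j k hkj hji) ∨
    -- g₂
    (∃ (l : Fin n) (_h1 : k < l) (h2 : l < j),
      w = Xv n j k hkj • rGen n i j l h2 hji
          + Xv n i l (h2.trans hji) • rGen n i j k hkj hji) ∨
    -- g₃
    (∃ (l : Fin n) (h1 : j < l) (h2 : l < i),
      w = -(Xv n j k hkj • rGen n i l j h1 h2)
          + Xv n i l h2 • rGen n i j k hkj hji) ∨
    -- g₄
    (∃ (l : Fin n) (h1 : i < l),
      w = Xv n j k hkj • rGen n l i j hji h1
          + Xv n l i h1 • rGen n i j k hkj hji) ∨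
    -- h₁
    (∃ (l : Fin n) (h1 : l < k),
      w = (Xv n i l (h1.trans (hkj.trans hji)) + Xv n j l (h1.trans hkj) + Xv n k l h1) •
          rGen n i j k hkj hji) ∨
    -- h₂
    (w = (Xv n i k (hkj.trans hji) + Xv n j k hkj) • rGen n i j k hkj hji) ∨
    -- h₃
    (∃ (l : Fin n) (h1 : k < l) (_h2 : l < j), w = Xv n l k h1 • rGen n i j k hkj hji) ∨
    -- h₄
    (∃ (l : Fin n) (h1 : j < l) (_h2 : l < i),
      w = Xv n l k (hkj.trans h1) • rGen n i j k hkj hji) ∨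
    -- h₅
    (∃ (l : Fin n) (h1 : j < l) (_h2 : l < i), w = Xv n l j h1 • rGen n i j k hkj hji) ∨
    -- h₆
    (∃ (l : Fin n) (h1 : i < l),
      w = Xv n l k ((hkj.trans hji).trans h1) • rGen n i j k hkj hji) ∨
    -- h₇
    (∃ (l : Fin n) (h1 : i < l), w = Xv n l j (hji.trans h1) • rGen n i j k hkj hji) ∨
    -- h₈
    (∃ (s t : Fin n) (h : t < s), s ≠ i ∧ s ≠ j ∧ s ≠ k ∧ t ≠ i ∧ t ≠ j ∧ t ≠ k ∧
      w = Xv n s t h • rGen n i j k hkj hji) }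

/-- The `S`-submodule of `F` spanned by `B`. -/
noncomputable def spanB (n : ℕ) : Submodule (Sn n) (Fn n) := Submodule.span (Sn n) (BSet n)

/-- The infinitesimal Alexander invariant `𝔅ₙ = F / span_S(B)` of `PΣₙ⁺`. -/
abbrev Bn (n : ℕ) := Fn n ⧸ spanB n

/-!
Modulo `B`, relation `g₄` turns `x_{kp} r_{ijk}` into `-x_{ij} r_{jkp}`, and `r_{jkp}` is killed by
`x_{ik}` (`h₇`) and by `x_{il}` for `p ≤ l < k` (`h₆`, `h₈`). Multiplying `h₂` by `x_{kp}` thus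
settles `x_{jk} x_{kp} r_{ijk}`; for `q < k`, `g₂` trades `x_{jq} r_{ijk}` for `-x_{ik} r_{ijq}`, and
`x_{kp} r_{ijq}` lies in `span B` (`h₃`, `h₈`). Finally `x_{kp} h₁` expresses `x_{kl} x_{kp} r_{ijk}`
through `x_{il} x_{kp} r_{ijk}` and `x_{jl} x_{kp} r_{ijk}`, both already handled.
-/

section
variable {n : ℕ}

theorem g2_mem_spanB (a b c l : Fin n) (hcb : c < b) (hba : b < a) (hcl : c < l) (hlb : l < b) :
    Xv n b c hcb • rGen n a b l hlb hba + Xv n a l (hlb.trans hba) • rGen n a b c hcb hba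
      ∈ spanB n :=
  Submodule.subset_span ⟨a, b, c, hcb, hba, .inr (.inl ⟨l, hcl, hlb, rfl⟩)⟩

theorem g4_mem_spanB (a b c l : Fin n) (hcb : c < b) (hba : b < a) (hal : a < l) :
    Xv n b c hcb • rGen n l a b hba hal + Xv n l a hal • rGen n a b c hcb hba ∈ spanB n :=
  Submodule.subset_span ⟨a, b, c, hcb, hba, .inr (.inr (.inr (.inl ⟨l, hal, rfl⟩)))⟩

theorem h1_mem_spanB (a b c l : Fin n) (hcb : c < b) (hba : b < a) (hlc : l < c) :
    (Xv n a l (hlc.trans (hcb.trans hba)) + Xv n b l (hlc.trans hcb) + Xv n c l hlc) •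
      rGen n a b c hcb hba ∈ spanB n :=
  Submodule.subset_span ⟨a, b, c, hcb, hba, .inr (.inr (.inr (.inr (.inl ⟨l, hlc, rfl⟩))))⟩

theorem h2_mem_spanB (a b c : Fin n) (hcb : c < b) (hba : b < a) :
    (Xv n a c (hcb.trans hba) + Xv n b c hcb) • rGen n a b c hcb hba ∈ spanB n :=
  Submodule.subset_span ⟨a, b, c, hcb, hba, .inr (.inr (.inr (.inr (.inr (.inl rfl)))))⟩

theorem h3_mem_spanB (a b c l : Fin n) (hcb : c < b) (hba : b < a) (hcl : c < l) (hlb : l < b) :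
    Xv n l c hcl • rGen n a b c hcb hba ∈ spanB n :=
  Submodule.subset_span ⟨a, b, c, hcb, hba,
    .inr (.inr (.inr (.inr (.inr (.inr (.inl ⟨l, hcl, hlb, rfl⟩))))))⟩

theorem h6_mem_spanB (a b c l : Fin n) (hcb : c < b) (hba : b < a) (hal : a < l) :
    Xv n l c ((hcb.trans hba).trans hal) • rGen n a b c hcb hba ∈ spanB n :=
  Submodule.subset_span ⟨a, b, c, hcb, hba,
    .inr (.inr (.inr (.inr (.inr (.inr (.inr (.inr (.inr (.inl ⟨l, hal, rfl⟩)))))))))⟩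

theorem h7_mem_spanB (a b c l : Fin n) (hcb : c < b) (hba : b < a) (hal : a < l) :
    Xv n l b (hba.trans hal) • rGen n a b c hcb hba ∈ spanB n :=
  Submodule.subset_span ⟨a, b, c, hcb, hba,
    .inr (.inr (.inr (.inr (.inr (.inr (.inr (.inr (.inr (.inr (.inl ⟨l, hal, rfl⟩))))))))))⟩

theorem h8_mem_spanB (a b c s t : Fin n) (hcb : c < b) (hba : b < a) (hts : t < s)
    (hsa : s ≠ a) (hsb : s ≠ b) (hsc : s ≠ c) (hta : t ≠ a) (htb : t ≠ b) (htc : t ≠ c) :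
    Xv n s t hts • rGen n a b c hcb hba ∈ spanB n :=
  Submodule.subset_span ⟨a, b, c, hcb, hba,
    .inr (.inr (.inr (.inr (.inr (.inr (.inr (.inr (.inr (.inr (.inr
      ⟨s, t, hts, hsa, hsb, hsc, hta, htb, htc, rfl⟩))))))))))⟩

theorem Xv_smul_rGen_mem_spanB_of_between (a b c s p : Fin n) (hcb : c < b) (hba : b < a)
    (hcs : c < s) (hsb : s < b) (hps : p < s) :
    Xv n s p hps • rGen n a b c hcb hba ∈ spanB n := by
  rcases eq_or_ne p c with rfl | hpc
  · exact h3_mem_spanB a b p s hcb hba hcs hsb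
  · exact h8_mem_spanB a b c s p hcb hba hps (hsb.trans hba).ne hsb.ne hcs.ne'
      (hps.trans (hsb.trans hba)).ne (hps.trans hsb).ne hpc

theorem Xv_smul_rGen_mem_spanB_of_above (a b c s p : Fin n) (hcb : c < b) (hba : b < a)
    (has : a < s) (hpb : p ≤ b) :
    Xv n s p (hpb.trans_lt (hba.trans has)) • rGen n a b c hcb hba ∈ spanB n := by
  rcases hpb.eq_or_lt with rfl | hpb'
  · exact h7_mem_spanB a p c s hcb hba has
  rcases eq_or_ne p c with rfl | hpc
  · exact h6_mem_spanB a b p s hcb hba has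
  · exact h8_mem_spanB a b c s p hcb hba _ has.ne' (hba.trans has).ne'
      ((hcb.trans hba).trans has).ne' (hpb'.trans hba).ne hpb'.ne hpc

theorem mul_Xv_smul_rGen_mem_spanB (a b c p : Fin n) (hcb : c < b) (hba : b < a) (hpc : p < c)
    (y : Sn n) (hy : y • rGen n b c p hpc hcb ∈ spanB n) :
    (y * Xv n c p hpc) • rGen n a b c hcb hba ∈ spanB n := by
  have key : (y * Xv n c p hpc) • rGen n a b c hcb hba =
      y • (Xv n c p hpc • rGen n a b c hcb hba + Xv n a b hba • rGen n b c p hpc hcb)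
        - Xv n a b hba • (y • rGen n b c p hpc hcb) := by
    module
  rw [key]
  exact sub_mem (Submodule.smul_mem _ _ (g4_mem_spanB b c p a hpc hcb hba))
    (Submodule.smul_mem _ _ hy)

theorem xjq_xkp_smul_rGen_mem_spanB (i j k q p : Fin n) (hkj : k < j) (hji : j < i)
    (hq : q ≤ k) (hp : p < k) :
    (Xv n j q (hq.trans_lt hkj) * Xv n k p hp) • rGen n i j k hkj hji ∈ spanB n := by
  rcases hq.eq_or_lt with rfl | hqk
  · have hik : (Xv n i q (hkj.trans hji) * Xv n q p hp) • rGen n i j q hkj hji ∈ spanB n :=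
      mul_Xv_smul_rGen_mem_spanB i j q p hkj hji hp _
        (Xv_smul_rGen_mem_spanB_of_above j q p i q hp hkj hji le_rfl)
    have key : (Xv n j q hkj * Xv n q p hp) • rGen n i j q hkj hji =
        Xv n q p hp • ((Xv n i q (hkj.trans hji) + Xv n j q hkj) • rGen n i j q hkj hji)
          - (Xv n i q (hkj.trans hji) * Xv n q p hp) • rGen n i j q hkj hji := by
      module
    rw [key]
    exact sub_mem (Submodule.smul_mem _ _ (h2_mem_spanB i j q hkj hji)) hik
  · have key : (Xv n j q (hqk.trans hkj) * Xv n k p hp) • rGen n i j k hkj hji =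
        Xv n k p hp • (Xv n j q (hqk.trans hkj) • rGen n i j k hkj hji
            + Xv n i k (hkj.trans hji) • rGen n i j q (hqk.trans hkj) hji)
          - Xv n i k (hkj.trans hji) • (Xv n k p hp • rGen n i j q (hqk.trans hkj) hji) := by
      module
    rw [key]
    exact sub_mem (Submodule.smul_mem _ _ (g2_mem_spanB i j q k (hqk.trans hkj) hji hqk hkj))
      (Submodule.smul_mem _ _
        (Xv_smul_rGen_mem_spanB_of_between i j q k p (hqk.trans hkj) hji hqk hkj hp))

theorem xkl_xkp_smul_rGen_mem_spanB (i j k l p : Fin n) (hkj : k < j) (hji : j < i)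
    (hpl : p ≤ l) (hlk : l < k) :
    (Xv n k l hlk * Xv n k p (hpl.trans_lt hlk)) • rGen n i j k hkj hji ∈ spanB n := by
  have hp : p < k := hpl.trans_lt hlk
  have hil : (Xv n i l (hlk.trans (hkj.trans hji)) * Xv n k p hp) • rGen n i j k hkj hji
      ∈ spanB n :=
    mul_Xv_smul_rGen_mem_spanB i j k p hkj hji hp _
      (Xv_smul_rGen_mem_spanB_of_above j k p i l hp hkj hji hlk.le)
  have key : (Xv n k l hlk * Xv n k p hp) • rGen n i j k hkj hji =
      Xv n k p hp • ((Xv n i l (hlk.trans (hkj.trans hji)) + Xv n j l (hlk.trans hkj)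
          + Xv n k l hlk) • rGen n i j k hkj hji)
        - (Xv n i l (hlk.trans (hkj.trans hji)) * Xv n k p hp) • rGen n i j k hkj hji
        - (Xv n j l (hlk.trans hkj) * Xv n k p hp) • rGen n i j k hkj hji := by
    module
  rw [key]
  exact sub_mem (sub_mem (Submodule.smul_mem _ _ (h1_mem_spanB i j k l hkj hji hlk)) hil)
    (xjq_xkp_smul_rGen_mem_spanB i j k l p hkj hji hlk.le hp)

end

theorem quadratic_elements_mem_spanB_general (n : ℕ)
    (i j k : Fin n) (hkj : k < j) (hji : j < i) :
    (∀ (l p : Fin n) (hpl : p ≤ l) (hlk : l < k),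
      (Xv n k l hlk * Xv n k p (lt_of_le_of_lt hpl hlk)) • rGen n i j k hkj hji ∈ spanB n) ∧
    (∀ (q p : Fin n) (hq : q ≤ k) (hp : p < k),
      (Xv n j q (lt_of_le_of_lt hq hkj) * Xv n k p hp) • rGen n i j k hkj hji ∈ spanB n) :=
  ⟨fun l p hpl hlk => xkl_xkp_smul_rGen_mem_spanB i j k l p hkj hji hpl hlk,
   fun q p hq hp => xjq_xkp_smul_rGen_mem_spanB i j k q p hkj hji hq hp⟩

/-- For all `k < j < i`, the elements `x_{kl} x_{kp}·r_{ijk}` (for `p ≤ l < k`) and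
`x_{jq} x_{kp}·r_{ijk}` (for `q ≤ k`, `p < k`; all indices `0`-indexed) lie in the
`S`-submodule `span_S(B)`. -/
theorem quadratic_elements_mem_spanB (n : ℕ) (hn : 3 ≤ n)
    (i j k : Fin n) (hkj : k < j) (hji : j < i) :
    (∀ (l p : Fin n) (hpl : p ≤ l) (hlk : l < k),
      (Xv n k l hlk * Xv n k p (lt_of_le_of_lt hpl hlk)) • rGen n i j k hkj hji ∈ spanB n) ∧
    (∀ (q p : Fin n) (hq : q ≤ k) (hp : p < k),
      (Xv n j q (lt_of_le_of_lt hq hkj) * Xv n k p hp) • rGen n i j k hkj hji ∈ spanB n) :=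
  quadratic_elements_mem_spanB_general n i j k hkj hji
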